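/- For every t ≥ 1 one has κ_t ≤ α*·t, and lim_{t→∞} κ_t/t = α*, where α* = sup_{m≥1} ᾱ_m/m. -/

import Mathlib

open Filter Finset

/-- A letter of the alphabet `{1,2,3}`. -/
abbrev Letter := Fin 3

/-- A word: a finite (possibly empty) sequence of letters. -/
abbrev Word := List Letter

/-- Adjacency of two words: `σ ≠ τ`, and writing `σ = β ++ σ'`, `τ = β ++ τ'` with `β`
the longest common prefix, either one of `σ'`, `τ'` is empty and the other uses at most two
distinct letters, or `σ' = i j^k` and `τ' = j i^{k'}` for distinct letters `i ≠ j`. -/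
def WordAdj (σ τ : Word) : Prop :=
  σ ≠ τ ∧ ∃ β σ' τ' : Word,
    σ = β ++ σ' ∧ τ = β ++ τ' ∧
    ((σ' = [] ∧ τ'.toFinset.card ≤ 2) ∨
     (τ' = [] ∧ σ'.toFinset.card ≤ 2) ∨
     (∃ (i j : Letter) (k k' : ℕ), i ≠ j ∧
        σ' = i :: List.replicate k j ∧ τ' = j :: List.replicate k' i))

/-- The graph `G_t`: vertices are the words of length at most `t` (all other words are
isolated), with adjacency `WordAdj`. -/
def Gt (t : ℕ) : SimpleGraph Word where
  Adj σ τ := σ.length ≤ t ∧ τ.length ≤ t ∧ WordAdj σ τ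
  symm := by
    constructor
    rintro σ τ ⟨h1, h2, hne, β, σ', τ', e1, e2, h3⟩
    refine ⟨h2, h1, hne.symm, β, τ', σ', e2, e1, ?_⟩
    rcases h3 with h | h | ⟨i, j, k, k', hij, hs, ht⟩
    · exact Or.inr (Or.inl h)
    · exact Or.inl h
    · exact Or.inr (Or.inr ⟨j, i, k', k, hij.symm, ht, hs⟩)
  loopless := ⟨fun σ h => h.2.2.1 rfl⟩

/-- `dW t σ τ` is the geodesic distance `d_t(σ,τ)` in the graph `G_t`. -/
noncomputable def dW (t : ℕ) (σ τ : Word) : ℕ := (Gt t).dist σ τ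

/-- Length of the longest suffix of `σ` using at most two distinct letters. -/
def suffLen (σ : Word) : ℕ :=
  Nat.findGreatest (fun m => (σ.drop (σ.length - m)).toFinset.card ≤ 2) σ.length

/-- `fW σ = τ₂` where `σ = τ₂τ₁` and `τ₁` is the longest suffix of `σ` using at most two
distinct letters; `fW [] = []`. -/
def fW (σ : Word) : Word := σ.take (σ.length - suffLen σ)

/-- `ω(σ)`: the least `n ≥ 0` with `f^[n] σ = ∅`. -/
noncomputable def omegaW (σ : Word) : ℕ := sInf {n : ℕ | fW^[n] σ = []}

/-- `L(σ) = d_{|σ|}(σ, ∅) - 1` for nonempty `σ`, and `L(∅) = 0`. -/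
noncomputable def Lw (σ : Word) : ℕ := if σ = [] then 0 else dW σ.length σ [] - 1

/-- `ᾱ_m`: the average of `L` over the `3^m` words of length `m`. -/
noncomputable def alphaBar (m : ℕ) : ℝ :=
  (∑ v : Fin m → Letter, (Lw (List.ofFn v) : ℝ)) / 3 ^ m

/-- `α* = sup_{m ≥ 1} ᾱ_m / m`. -/
noncomputable def alphaStar : ℝ :=
  sSup {x : ℝ | ∃ m : ℕ, 1 ≤ m ∧ x = alphaBar m / m}

/-- `#V_t = (3^{t+1} - 1)/2`, the number of vertices of `G_t`, as a real number. -/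
noncomputable def Nv (t : ℕ) : ℝ := ((3 : ℝ) ^ (t + 1) - 1) / 2

/-- The sum of `d_t(σ,τ)` over all ordered pairs of words `σ, τ ∈ V_t`
(twice the sum over unordered pairs of distinct words). -/
noncomputable def pairSum (t : ℕ) : ℝ :=
  ∑ k ∈ range (t + 1), ∑ l ∈ range (t + 1),
    ∑ v : Fin k → Letter, ∑ w : Fin l → Letter,
      (dW t (List.ofFn v) (List.ofFn w) : ℝ)

/-- The average path length `D̄(t)` of `G_t`. -/
noncomputable def Dbar (t : ℕ) : ℝ := pairSum t / (Nv t * (Nv t - 1))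

/-- `κ_t = (Σ_{σ ∈ V_t} L(σ)) / #V_t`. -/
noncomputable def kappa (t : ℕ) : ℝ :=
  (∑ k ∈ range (t + 1), ∑ v : Fin k → Letter, (Lw (List.ofFn v) : ℝ)) / Nv t

/-- `π_t`: the sum of `d_t(σ,τ)` over unordered pairs of distinct `σ, τ ∈ V_t`. -/
noncomputable def piT (t : ℕ) : ℝ := pairSum t / 2

/-- `μ_t`: the sum of `d_t(σ,τ)` over unordered pairs of distinct `σ, τ ∈ V_t`
having the same first letter. -/
noncomputable def muT (t : ℕ) : ℝ :=
  (∑ i : Letter, ∑ k ∈ range t, ∑ l ∈ range t,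
    ∑ v : Fin k → Letter, ∑ w : Fin l → Letter,
      (dW t (i :: List.ofFn v) (i :: List.ofFn w) : ℝ)) / 2

/-- `λ_t = Σ_{σ ∈ V_t, σ ≠ ∅} d_t(σ, ∅)`. -/
noncomputable def lambdaT (t : ℕ) : ℝ :=
  ∑ k ∈ Finset.Icc 1 t, ∑ v : Fin k → Letter, (dW t (List.ofFn v) [] : ℝ)

/-- `ν_t = Σ_{i<j} Σ_{|σ'|,|τ'| ≤ t-1} d_t(iσ', jτ')`. -/
noncomputable def nuT (t : ℕ) : ℝ :=
  ∑ i : Letter, ∑ j : Letter,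
    if i < j then
      ∑ k ∈ range t, ∑ l ∈ range t,
        ∑ v : Fin k → Letter, ∑ w : Fin l → Letter,
          (dW t (i :: List.ofFn v) (j :: List.ofFn w) : ℝ)
    else 0

/-- `IsNormalDecomp σ τs`: `τs = [τ₁, …, τ_l]` (with `l ≥ 1`) is a normal decomposition
of `σ`: `σ = τ₁⋯τ_l`; `#τ₁ ≤ 2`, `|τ₁| ≥ 1`; `#τ_i = 2`, `|τ_i| ≥ 2` for `i ≥ 2`; and for
`i < l` the last letter of `τ_i` is the unique letter of the alphabet not appearing
in `τ_{i+1}`. -/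
def IsNormalDecomp (σ : Word) (τs : List Word) : Prop :=
  σ = τs.flatten ∧ τs ≠ [] ∧
  (∀ i : Fin τs.length,
    (i.1 = 0 → 1 ≤ (τs.get i).length ∧ (τs.get i).toFinset.card ≤ 2) ∧
    (1 ≤ i.1 → 2 ≤ (τs.get i).length ∧ (τs.get i).toFinset.card = 2)) ∧
  (∀ i : ℕ, ∀ h : i + 1 < τs.length,
    ∃ c : Letter, (τs.get ⟨i, Nat.lt_of_succ_lt h⟩).getLast? = some c ∧
      c ∉ (τs.get ⟨i + 1, h⟩).toFinset ∧
      ∀ c' : Letter, c' ∉ (τs.get ⟨i + 1, h⟩).toFinset → c' = c)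

/-- `W_{k₁⋯k_l}`: the number of words of length `k₁ + ⋯ + k_l` admitting a normal
decomposition into blocks of lengths `k₁, …, k_l`. -/
noncomputable def Wcount (ks : List ℕ) : ℕ :=
  Nat.card {σ : Word // ∃ τs : List Word, IsNormalDecomp σ τs ∧ τs.map List.length = ks}

/-- `Ē(t) = 3^{-t} Σ_{q ≥ 1} Σ_{k₁ ≥ 1, k₂,…,k_q ≥ 2, k₁+⋯+k_q = t} (q-1)·W_{k₁⋯k_q}`. -/
noncomputable def Ebar (t : ℕ) : ℝ :=
  ((∑ c : Composition t,
      if ∀ i ∈ c.blocks.tail, 2 ≤ i then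
        (c.blocks.length - 1) * Wcount c.blocks
      else 0 : ℕ) : ℝ) / 3 ^ t

/-!
`L` is superadditive under concatenation, `L(σ) + L(τ) ≤ L(στ)`. Indeed, a geodesic from `στ`
to `∅` in `G_{|στ|}` starts among the words with prefix `σ`, where deleting `σ` turns it into a
walk of `G_{|τ|}` from `τ`, and leaves them from a word `σa` with `a` adjacent to `∅`; from there
on, its longest common prefixes with `σ` form a walk of `G_{|σ|}` from `σ` to `∅`, because
truncation to a common prefix with `σ` maps adjacent words to equal or adjacent ones.

Averaging, `ᾱ` is superadditive, so `ᾱ_m / m → α* = sup ᾱ_m / m` by Fekete's lemma. Finally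
`κ_t = Σ_{k ≤ t} 3^k ᾱ_k / Σ_{k ≤ t} 3^k` is an average concentrated near `k = t`: the bound
`ᾱ_k ≤ α* k` gives `κ_t ≤ α* t`, and since `Σ_{k ≤ t} k 3^k ≥ (t - 1) Σ_{k ≤ t} 3^k`, a bound
`ᾱ_k ≥ γ k - C` with `γ < α*` gives `κ_t ≥ γ (t - 1) - C`.
-/

section LongestCommonPrefix

variable {α : Type*} [DecidableEq α]

def lcp : List α → List α → List α
  | a :: as, b :: bs => if a = b then a :: lcp as bs else []
  | _, _ => []

@[simp]
lemma lcp_nil_left (y : List α) : lcp [] y = [] := rfl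

@[simp]
lemma lcp_nil_right (x : List α) : lcp x [] = [] := by cases x <;> rfl

lemma lcp_prefix_left : ∀ x y : List α, lcp x y <+: x
  | [], _ => by simp [lcp]
  | _ :: _, [] => by simp
  | a :: as, b :: bs => by
    rw [lcp]
    split_ifs
    · exact List.cons_prefix_cons.mpr ⟨rfl, lcp_prefix_left as bs⟩
    · exact List.nil_prefix

lemma lcp_prefix_right : ∀ x y : List α, lcp x y <+: y
  | [], _ => by simp [lcp]
  | _ :: _, [] => by simp
  | a :: as, b :: bs => by
    rw [lcp]
    split_ifs with hab
    · exact hab ▸ List.cons_prefix_cons.mpr ⟨rfl, lcp_prefix_right as bs⟩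
    · exact List.nil_prefix

lemma lcp_append_append (β x y : List α) : lcp (β ++ x) (β ++ y) = β ++ lcp x y := by
  induction β with
  | nil => rfl
  | cons a β ih => simp [lcp, ih]

lemma lcp_append_self (σ x : List α) : lcp (σ ++ x) σ = σ := by
  simpa using lcp_append_append σ x []

lemma lcp_append_of_not_prefix :
    ∀ {β σ : List α} (x : List α), ¬ β <+: σ → lcp (β ++ x) σ = lcp β σ
  | [], _, _, h => absurd List.nil_prefix h
  | _ :: _, [], _, _ => by simp
  | a :: β, b :: σ, x, h => by
    rw [List.cons_append, lcp, lcp]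
    split_ifs with hab
    · subst hab
      rw [lcp_append_of_not_prefix x fun hp => h (List.cons_prefix_cons.mpr ⟨rfl, hp⟩)]
    · rfl

end LongestCommonPrefix

section Adjacency

lemma card_toFinset_le_of_subset {α : Type*} [DecidableEq α] {x y : List α} (h : x ⊆ y) :
    x.toFinset.card ≤ y.toFinset.card :=
  Finset.card_le_card fun _ ha => List.mem_toFinset.mpr (h (List.mem_toFinset.mp ha))

lemma card_toFinset_cons_replicate_le_two (i j : Letter) (k : ℕ) :
    (i :: List.replicate k j).toFinset.card ≤ 2 := by
  have hsub : (i :: List.replicate k j).toFinset ⊆ {i, j} := by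
    intro a ha
    simp only [List.mem_toFinset, List.mem_cons, List.mem_replicate] at ha
    rcases ha with rfl | ⟨_, rfl⟩ <;> simp
  exact (Finset.card_le_card hsub).trans (Finset.card_le_two)

lemma card_toFinset_le_two_of_wordAdj_tails {x y : Word}
    (h : (x = [] ∧ y.toFinset.card ≤ 2) ∨ (y = [] ∧ x.toFinset.card ≤ 2) ∨
      (∃ (i j : Letter) (k k' : ℕ), i ≠ j ∧
        x = i :: List.replicate k j ∧ y = j :: List.replicate k' i)) :
    x.toFinset.card ≤ 2 ∧ y.toFinset.card ≤ 2 := by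
  rcases h with ⟨rfl, h⟩ | ⟨rfl, h⟩ | ⟨i, j, k, k', _, rfl, rfl⟩
  · exact ⟨by simp, h⟩
  · exact ⟨h, by simp⟩
  · exact ⟨card_toFinset_cons_replicate_le_two .., card_toFinset_cons_replicate_le_two ..⟩

lemma WordAdj.symm {σ τ : Word} (h : WordAdj σ τ) : WordAdj τ σ := by
  obtain ⟨hne, β, x, y, hσ, hτ, h⟩ := h
  refine ⟨hne.symm, β, y, x, hτ, hσ, ?_⟩
  rcases h with h | h | ⟨i, j, k, k', hij, hx, hy⟩
  · exact Or.inr (Or.inl h)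
  · exact Or.inl h
  · exact Or.inr (Or.inr ⟨j, i, k', k, hij.symm, hy, hx⟩)

lemma WordAdj.of_cons_cons {c : Letter} {σ τ : Word} (h : WordAdj (c :: σ) (c :: τ)) :
    WordAdj σ τ := by
  obtain ⟨hne, β, x, y, hσ, hτ, h⟩ := h
  cases β with
  | nil =>
    subst hσ hτ
    rcases h with ⟨h, -⟩ | ⟨h, -⟩ | ⟨i, j, k, k', hij, hx, hy⟩
    · simp at h
    · simp at h
    · simp only [List.cons.injEq] at hx hy
      exact absurd (hx.1.symm.trans hy.1) hij
  | cons b β =>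
    simp only [List.cons_append, List.cons.injEq] at hσ hτ
    exact ⟨fun e => hne (e ▸ rfl), β, x, y, hσ.2, hτ.2, h⟩

lemma WordAdj.of_append_append {β σ τ : Word} (h : WordAdj (β ++ σ) (β ++ τ)) :
    WordAdj σ τ := by
  induction β with
  | nil => exact h
  | cons c β ih => exact ih h.of_cons_cons

lemma eq_or_wordAdj_of_prefix (β : Word) {σ τ : Word} (h : σ <+: τ)
    (hτ : τ.toFinset.card ≤ 2) : β ++ σ = β ++ τ ∨ WordAdj (β ++ σ) (β ++ τ) := by
  obtain ⟨r, rfl⟩ := h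
  rcases eq_or_ne r [] with rfl | hr
  · simp
  · refine Or.inr ⟨by simpa using hr.symm, β ++ σ, [], r, by simp, by simp, Or.inl ⟨rfl, ?_⟩⟩
    exact (card_toFinset_le_of_subset (List.subset_append_right σ r)).trans hτ

lemma lcp_eq_or_wordAdj {ρ ρ' : Word} (h : WordAdj ρ ρ') (σ : Word) :
    lcp ρ σ = lcp ρ' σ ∨ WordAdj (lcp ρ σ) (lcp ρ' σ) := by
  obtain ⟨-, β, x, y, rfl, rfl, h⟩ := h
  obtain ⟨hx, hy⟩ := card_toFinset_le_two_of_wordAdj_tails h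
  by_cases hβ : β <+: σ
  · obtain ⟨s, rfl⟩ := hβ
    rw [lcp_append_append, lcp_append_append]
    rcases List.prefix_or_prefix_of_prefix (lcp_prefix_right x s) (lcp_prefix_right y s)
      with hp | hp
    · exact eq_or_wordAdj_of_prefix β hp
        ((card_toFinset_le_of_subset (lcp_prefix_left y s).subset).trans hy)
    · exact (eq_or_wordAdj_of_prefix β hp
        ((card_toFinset_le_of_subset (lcp_prefix_left x s).subset).trans hx)).imp Eq.symm
        WordAdj.symm
  · exact Or.inl (by rw [lcp_append_of_not_prefix x hβ, lcp_append_of_not_prefix y hβ])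

lemma card_toFinset_le_two_of_wordAdj_of_not_prefix {σ a ρ : Word}
    (h : WordAdj (σ ++ a) ρ) (hρ : ¬ σ <+: ρ) : a.toFinset.card ≤ 2 := by
  obtain ⟨-, β, x, y, hσ, rfl, h⟩ := h
  rcases List.append_eq_append_iff.mp hσ with ⟨a', rfl, -⟩ | ⟨c', -, rfl⟩
  · exact absurd (List.prefix_append_of_prefix (List.prefix_append σ a')) hρ
  · exact (card_toFinset_le_of_subset (List.subset_append_right c' a)).trans
      (card_toFinset_le_two_of_wordAdj_tails h).1

end Adjacency

section Distance

open SimpleGraph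

lemma Gt_adj {t : ℕ} {σ τ : Word} :
    (Gt t).Adj σ τ ↔ σ.length ≤ t ∧ τ.length ≤ t ∧ WordAdj σ τ := Iff.rfl

lemma Gt_adj_of_append_append {n : ℕ} {σ a b : Word}
    (h : (Gt (σ.length + n)).Adj (σ ++ a) (σ ++ b)) : (Gt n).Adj a b := by
  obtain ⟨ha, hb, h⟩ := Gt_adj.mp h
  simp only [List.length_append] at ha hb
  exact Gt_adj.mpr ⟨by omega, by omega, h.of_append_append⟩

lemma exists_walk_lcp {T m : ℕ} {σ : Word} (hσ : σ.length ≤ m) {ρ ρ' : Word}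
    (q : (Gt T).Walk ρ ρ') : ∃ p : (Gt m).Walk (lcp ρ σ) (lcp ρ' σ), p.length ≤ q.length := by
  induction q with
  | nil => exact ⟨.nil, le_rfl⟩
  | @cons u v _ h q ih =>
    obtain ⟨p, hp⟩ := ih
    have hlen : ∀ w : Word, (lcp w σ).length ≤ m := fun w =>
      (lcp_prefix_right w σ).length_le.trans hσ
    rcases lcp_eq_or_wordAdj (Gt_adj.mp h).2.2 σ with he | ha
    · exact ⟨p.copy he.symm rfl, by simp; omega⟩
    · exact ⟨.cons (Gt_adj.mpr ⟨hlen u, hlen v, ha⟩) p, by simpa using hp⟩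

lemma exists_walk_nil_length_eq {t : ℕ} {σ : Word} (h : σ.length ≤ t) :
    ∃ p : (Gt t).Walk σ [], p.length = σ.length := by
  induction σ using List.reverseRecOn with
  | nil => exact ⟨.nil, rfl⟩
  | append_singleton σ a ih =>
    have hσ : σ.length ≤ t := by simp at h; omega
    obtain ⟨p, hp⟩ := ih hσ
    have hadj : (Gt t).Adj (σ ++ [a]) σ :=
      Gt_adj.mpr ⟨h, hσ, by simp, σ, [a], [], rfl, by simp, Or.inr (Or.inl ⟨rfl, by simp⟩)⟩
    exact ⟨.cons hadj p, by simp [hp]⟩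

lemma reachable_nil {t : ℕ} {σ : Word} (h : σ.length ≤ t) : (Gt t).Reachable σ [] :=
  ⟨(exists_walk_nil_length_eq h).choose⟩

lemma dW_nil_le_length {t : ℕ} {σ : Word} (h : σ.length ≤ t) : dW t σ [] ≤ σ.length := by
  obtain ⟨p, hp⟩ := exists_walk_nil_length_eq h
  exact hp ▸ dist_le p

lemma one_le_dW_nil {t : ℕ} {σ : Word} (hσ : σ ≠ []) (h : σ.length ≤ t) : 1 ≤ dW t σ [] :=
  (reachable_nil h).pos_dist_of_ne hσ

lemma dW_nil_le_one {t : ℕ} {σ : Word} (h : σ.length ≤ t) (hσ : σ.toFinset.card ≤ 2) :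
    dW t σ [] ≤ 1 := by
  rcases eq_or_ne σ [] with rfl | hne
  · simp [dW]
  · have hadj : (Gt t).Adj σ [] :=
      Gt_adj.mpr ⟨h, by simp, hne, [], σ, [], by simp, by simp, Or.inr (Or.inl ⟨rfl, hσ⟩)⟩
    exact (dist_eq_one_iff_adj.mpr hadj).le

lemma dW_nil_le_of_adj {t : ℕ} {σ τ : Word} (h : (Gt t).Adj σ τ) :
    dW t σ [] ≤ dW t τ [] + 1 := by
  have := h.reachable.dist_triangle_left []
  rw [dist_eq_one_iff_adj.mpr h] at this
  unfold dW
  omega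

lemma dW_drop_add_dW_le {n : ℕ} {σ c : Word} (hc : ¬ σ <+: c) :
    ∀ {ρ : Word} (q : (Gt (σ.length + n)).Walk ρ c), σ <+: ρ →
      dW n (ρ.drop σ.length) [] + dW σ.length σ (lcp c σ) ≤ q.length + 1 := by
  intro ρ q
  induction q with
  | nil => exact fun h => absurd h hc
  | @cons u v _ h q ih =>
    rintro ⟨a, rfl⟩
    rw [List.drop_left]
    by_cases hv : σ <+: v
    · obtain ⟨b, rfl⟩ := hv
      have hstep := dW_nil_le_of_adj (Gt_adj_of_append_append h)
      have hq := ih hc ⟨b, rfl⟩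
      rw [List.drop_left] at hq
      simp only [Walk.length_cons]
      omega
    · obtain ⟨hlen, -, hadj⟩ := Gt_adj.mp h
      have ha : dW n a [] ≤ 1 := by
        refine dW_nil_le_one ?_ (card_toFinset_le_two_of_wordAdj_of_not_prefix hadj hv)
        simp only [List.length_append] at hlen
        omega
      obtain ⟨p, hp⟩ := exists_walk_lcp le_rfl (.cons h q)
      have hσ := (dist_le p).trans hp
      rw [lcp_append_self] at hσ
      unfold dW at *
      omega

lemma dW_add_dW_le_dW_append {σ τ : Word} (hσ : σ ≠ []) :
    dW σ.length σ [] + dW τ.length τ [] ≤ dW (σ.length + τ.length) (σ ++ τ) [] + 1 := by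
  obtain ⟨q, hq⟩ := (reachable_nil (t := σ.length + τ.length) (σ := σ ++ τ)
    (by simp)).exists_walk_length_eq_dist
  have := dW_drop_add_dW_le (by simpa using hσ) q ⟨τ, rfl⟩
  rw [List.drop_left, lcp_nil_left, hq] at this
  unfold dW at *
  omega

lemma Lw_add_Lw_le (σ τ : Word) : Lw σ + Lw τ ≤ Lw (σ ++ τ) := by
  rcases eq_or_ne σ [] with rfl | hσ
  · simp [Lw]
  rcases eq_or_ne τ [] with rfl | hτ
  · simp [Lw]
  have := dW_add_dW_le_dW_append (τ := τ) hσ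
  have h1 := one_le_dW_nil hσ le_rfl
  have h2 := one_le_dW_nil hτ le_rfl
  simp only [Lw, if_neg hσ, if_neg hτ, if_neg (List.append_ne_nil_of_left_ne_nil hσ τ),
    List.length_append]
  omega

lemma Lw_le_length (σ : Word) : Lw σ ≤ σ.length := by
  unfold Lw
  split_ifs
  · exact Nat.zero_le _
  · exact (Nat.sub_le _ _).trans (dW_nil_le_length le_rfl)

end Distance

section WordAverage

variable {α : Type*} [Fintype α]

noncomputable def wordAvg (f : List α → ℝ) (m : ℕ) : ℝ :=
  (∑ v : Fin m → α, f (List.ofFn v)) / Fintype.card α ^ m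

lemma wordAvg_nonneg {f : List α → ℝ} (hf : ∀ σ, 0 ≤ f σ) (m : ℕ) : 0 ≤ wordAvg f m :=
  div_nonneg (Finset.sum_nonneg fun _ _ => hf _) (by positivity)

lemma wordAvg_le [Nonempty α] {f : List α → ℝ} {C : ℝ} {m : ℕ}
    (hf : ∀ σ : List α, σ.length = m → f σ ≤ C) : wordAvg f m ≤ C := by
  rw [wordAvg, div_le_iff₀ (by positivity)]
  calc ∑ v : Fin m → α, f (List.ofFn v) ≤ ∑ _v : Fin m → α, C :=
        Finset.sum_le_sum fun v _ => hf _ (List.length_ofFn)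
    _ = C * Fintype.card α ^ m := by simp [mul_comm]

lemma wordAvg_add_le [Nonempty α] {f : List α → ℝ} (hf : ∀ σ τ, f σ + f τ ≤ f (σ ++ τ))
    (m n : ℕ) : wordAvg f m + wordAvg f n ≤ wordAvg f (m + n) := by
  set N : ℝ := (Fintype.card α : ℝ)
  have hsplit : ∑ u : Fin (m + n) → α, f (List.ofFn u) =
      ∑ v : Fin m → α, ∑ w : Fin n → α, f (List.ofFn v ++ List.ofFn w) := by
    rw [← (Fin.appendEquiv m n).sum_comp, Fintype.sum_prod_type]
    simp [Fin.appendEquiv, List.ofFn_fin_append]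
  calc wordAvg f m + wordAvg f n
      = (∑ v : Fin m → α, ∑ w : Fin n → α, (f (List.ofFn v) + f (List.ofFn w))) / N ^ (m + n) := by
        simp only [Finset.sum_add_distrib, Finset.sum_const, Finset.card_univ, Fintype.card_fun,
          Fintype.card_fin, nsmul_eq_mul, ← Finset.mul_sum, wordAvg, N]
        push_cast
        rw [pow_add]
        field_simp
    _ ≤ (∑ v : Fin m → α, ∑ w : Fin n → α, f (List.ofFn v ++ List.ofFn w)) / N ^ (m + n) := by
        gcongr with v _ w _
        exact hf _ _
    _ = wordAvg f (m + n) := by rw [wordAvg, hsplit]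

end WordAverage

theorem tendsto_div_sSup_of_superadditive {u : ℕ → ℝ} (hu : ∀ m n, u m + u n ≤ u (m + n))
    (hbdd : BddAbove (Set.range fun n => u n / n)) :
    Tendsto (fun n => u n / n) atTop (nhds (sSup {x | ∃ m : ℕ, 1 ≤ m ∧ x = u m / m})) := by
  have hsub : Subadditive (-u) := fun m n => by simp only [Pi.neg_apply]; linarith [hu m n]
  have hbdd' : BddBelow (Set.range fun n => (-u) n / n) := by
    obtain ⟨C, hC⟩ := hbdd
    exact ⟨-C, by rintro _ ⟨n, rfl⟩; simpa [neg_div] using hC ⟨n, rfl⟩⟩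
  have hlim : Tendsto (fun n => u n / n) atTop (nhds (-hsub.lim)) := by
    simpa [neg_div] using (hsub.tendsto_lim hbdd').neg
  have hle : ∀ n : ℕ, 1 ≤ n → u n / n ≤ -hsub.lim := fun n hn => by
    have := hsub.lim_le_div hbdd' (Nat.one_le_iff_ne_zero.mp hn)
    simp only [Pi.neg_apply, neg_div] at this
    linarith
  have hS : BddAbove {x | ∃ m : ℕ, 1 ≤ m ∧ x = u m / m} :=
    hbdd.mono <| by rintro _ ⟨m, -, rfl⟩; exact ⟨m, rfl⟩
  convert hlim using 2
  refine le_antisymm (csSup_le ⟨_, 1, le_rfl, rfl⟩ fun _ ⟨n, hn, hx⟩ => hx ▸ hle n hn) ?_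
  exact le_of_tendsto hlim (eventually_atTop.mpr ⟨1, fun n hn => le_csSup hS ⟨n, hn, rfl⟩⟩)

section GeometricAverage

lemma sum_range_pow_three (t : ℕ) : ∑ k ∈ range (t + 1), (3 : ℝ) ^ k = Nv t := by
  rw [geom_sum_eq (by norm_num), Nv]
  norm_num

lemma Nv_pos (t : ℕ) : 0 < Nv t := by
  rw [← sum_range_pow_three]
  positivity

lemma sum_range_mul_pow_three (t : ℕ) :
    ∑ k ∈ range (t + 1), (k : ℝ) * 3 ^ k = 3 / 4 * ((2 * t - 1) * 3 ^ t + 1) := by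
  induction t with
  | zero => norm_num
  | succ t ih =>
    rw [Finset.sum_range_succ, ih]
    push_cast
    ring

lemma sum_range_mul_pow_three_le (t : ℕ) : ∑ k ∈ range (t + 1), (k : ℝ) * 3 ^ k ≤ t * Nv t := by
  rw [← sum_range_pow_three, Finset.mul_sum]
  gcongr with k hk
  exact_mod_cast Nat.lt_succ_iff.mp (Finset.mem_range.mp hk)

lemma sub_one_mul_Nv_le_sum_range (t : ℕ) :
    (t - 1) * Nv t ≤ ∑ k ∈ range (t + 1), (k : ℝ) * 3 ^ k := by
  rw [sum_range_mul_pow_three, Nv, pow_succ]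
  nlinarith [pow_nonneg (by norm_num : (0 : ℝ) ≤ 3) t, (t.cast_nonneg : (0 : ℝ) ≤ t)]

variable {a : ℕ → ℝ}

lemma geomAvg_le {A : ℝ} (hA : 0 ≤ A) (ha : ∀ k, a k ≤ A * k) (t : ℕ) :
    (∑ k ∈ range (t + 1), 3 ^ k * a k) / Nv t ≤ A * t := by
  rw [div_le_iff₀ (Nv_pos t)]
  calc ∑ k ∈ range (t + 1), 3 ^ k * a k ≤ ∑ k ∈ range (t + 1), A * ((k : ℝ) * 3 ^ k) :=
        Finset.sum_le_sum fun k _ => by nlinarith [ha k, pow_pos (by norm_num : (0 : ℝ) < 3) k]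
    _ ≤ A * (t * Nv t) := by rw [← Finset.mul_sum]; gcongr; exact sum_range_mul_pow_three_le t
    _ = A * t * Nv t := by ring

lemma le_geomAvg {γ C : ℝ} (hγ : 0 ≤ γ) (ha : ∀ k, γ * k - C ≤ a k) (t : ℕ) :
    γ * (t - 1) - C ≤ (∑ k ∈ range (t + 1), 3 ^ k * a k) / Nv t := by
  rw [le_div_iff₀ (Nv_pos t)]
  calc (γ * (t - 1) - C) * Nv t
      ≤ γ * ∑ k ∈ range (t + 1), (k : ℝ) * 3 ^ k - C * ∑ k ∈ range (t + 1), (3 : ℝ) ^ k := by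
        rw [sum_range_pow_three]
        nlinarith [sub_one_mul_Nv_le_sum_range t]
    _ = ∑ k ∈ range (t + 1), 3 ^ k * (γ * k - C) := by
        rw [Finset.mul_sum, Finset.mul_sum, ← Finset.sum_sub_distrib]
        exact Finset.sum_congr rfl fun k _ => by ring
    _ ≤ ∑ k ∈ range (t + 1), 3 ^ k * a k := by gcongr with k; exact ha k

lemma exists_le_of_tendsto_div {A γ : ℝ} (h0 : ∀ k, 0 ≤ a k)
    (hlim : Tendsto (fun k => a k / k) atTop (nhds A)) (hγ : 0 ≤ γ) (hγA : γ < A) :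
    ∃ M : ℕ, ∀ k, γ * k - γ * M ≤ a k := by
  obtain ⟨M, hM⟩ := eventually_atTop.mp ((hlim.eventually (lt_mem_nhds hγA)).and
    (eventually_ge_atTop 1))
  refine ⟨M, fun k => ?_⟩
  rcases le_or_gt M k with hk | hk
  · obtain ⟨hlt, hk1⟩ := hM k hk
    have hk0 : (0 : ℝ) < k := by exact_mod_cast hk1
    have := (lt_div_iff₀ hk0).mp hlt
    nlinarith
  · have : (k : ℝ) ≤ M := by exact_mod_cast hk.le
    nlinarith [h0 k]

lemma tendsto_geomAvg_div {A : ℝ} (h0 : ∀ k, 0 ≤ a k) (ha : ∀ k, a k ≤ A * k)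
    (hlim : Tendsto (fun k => a k / k) atTop (nhds A)) :
    Tendsto (fun t : ℕ => (∑ k ∈ range (t + 1), 3 ^ k * a k) / Nv t / t) atTop (nhds A) := by
  have hA : 0 ≤ A := by simpa using (h0 1).trans (ha 1)
  have havg_nonneg : ∀ t, 0 ≤ (∑ k ∈ range (t + 1), 3 ^ k * a k) / Nv t / t := fun t =>
    div_nonneg (div_nonneg (Finset.sum_nonneg fun k _ => mul_nonneg (by positivity) (h0 k))
      (Nv_pos t).le) t.cast_nonneg
  refine tendsto_order.2 ⟨fun b hb => ?_, fun b hb => ?_⟩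
  · rcases lt_or_ge b 0 with hb0 | hb0
    · exact Eventually.of_forall fun t => hb0.trans_le (havg_nonneg t)
    obtain ⟨γ, hbγ, hγA⟩ := exists_between hb
    obtain ⟨M, hM⟩ := exists_le_of_tendsto_div h0 hlim (hb0.trans hbγ.le) hγA
    have hlow : Tendsto (fun t : ℕ => γ - γ * (M + 1) / t) atTop (nhds γ) := by
      simpa using tendsto_const_nhds.sub (tendsto_const_div_atTop_nhds_zero_nat (γ * (M + 1)))
    filter_upwards [hlow.eventually (lt_mem_nhds hbγ), eventually_ge_atTop 1]
      with t hbt ht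
    have ht0 : (0 : ℝ) < t := by exact_mod_cast ht
    refine hbt.trans_le ?_
    rw [le_div_iff₀ ht0]
    have := le_geomAvg (hb0.trans hbγ.le) hM t
    rw [sub_mul, div_mul_cancel₀ _ ht0.ne']
    linarith
  · filter_upwards [eventually_ge_atTop 1] with t ht
    have ht0 : (0 : ℝ) < t := by exact_mod_cast ht
    exact (div_le_iff₀ ht0).mpr (geomAvg_le hA ha t) |>.trans_lt hb

end GeometricAverage

lemma alphaBar_eq_wordAvg : alphaBar = wordAvg fun σ => (Lw σ : ℝ) := by
  funext m
  simp [alphaBar, wordAvg]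

lemma alphaBar_zero : alphaBar 0 = 0 := by
  simp [alphaBar, Lw]

lemma alphaBar_add_le (m n : ℕ) : alphaBar m + alphaBar n ≤ alphaBar (m + n) := by
  rw [alphaBar_eq_wordAvg]
  exact wordAvg_add_le (fun σ τ => by exact_mod_cast Lw_add_Lw_le σ τ) m n

lemma alphaBar_nonneg (m : ℕ) : 0 ≤ alphaBar m := by
  rw [alphaBar_eq_wordAvg]
  exact wordAvg_nonneg (fun σ => Nat.cast_nonneg _) m

lemma alphaBar_le (m : ℕ) : alphaBar m ≤ m := by
  rw [alphaBar_eq_wordAvg]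
  exact wordAvg_le fun σ hσ => by exact_mod_cast hσ ▸ Lw_le_length σ

lemma bddAbove_alphaBar_div : BddAbove (Set.range fun m : ℕ => alphaBar m / m) := by
  refine ⟨1, ?_⟩
  rintro _ ⟨m, rfl⟩
  exact div_le_one_of_le₀ (alphaBar_le m) m.cast_nonneg

lemma tendsto_alphaBar_div : Tendsto (fun m => alphaBar m / m) atTop (nhds alphaStar) :=
  tendsto_div_sSup_of_superadditive alphaBar_add_le bddAbove_alphaBar_div

lemma alphaBar_le_alphaStar_mul (m : ℕ) : alphaBar m ≤ alphaStar * m := by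
  rcases Nat.eq_zero_or_pos m with rfl | hm
  · simp [alphaBar_zero]
  have hbdd : BddAbove {x : ℝ | ∃ m : ℕ, 1 ≤ m ∧ x = alphaBar m / m} :=
    bddAbove_alphaBar_div.mono <| by rintro _ ⟨m, -, rfl⟩; exact ⟨m, rfl⟩
  exact (div_le_iff₀ (by exact_mod_cast hm)).mp (le_csSup hbdd ⟨m, hm, rfl⟩)

lemma alphaStar_nonneg : 0 ≤ alphaStar := by
  simpa using (alphaBar_nonneg 1).trans (alphaBar_le_alphaStar_mul 1)

lemma kappa_eq_geomAvg (t : ℕ) :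
    kappa t = (∑ k ∈ range (t + 1), 3 ^ k * alphaBar k) / Nv t := by
  simp only [kappa, alphaBar, mul_div_cancel₀ _ (pow_ne_zero _ (three_ne_zero (α := ℝ)))]

/-- For every `t ≥ 1`, `κ_t ≤ α*·t`, and `lim_{t→∞} κ_t/t = α*`. -/
theorem kappa_le_and_tendsto :
    (∀ t : ℕ, 1 ≤ t → kappa t ≤ alphaStar * t) ∧
    Tendsto (fun t : ℕ => kappa t / t) atTop (nhds alphaStar) := by
  refine ⟨fun t _ => kappa_eq_geomAvg t ▸ geomAvg_le alphaStar_nonneg alphaBar_le_alphaStar_mul t,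
    ?_⟩
  simpa only [kappa_eq_geomAvg] using
    tendsto_geomAvg_div alphaBar_nonneg alphaBar_le_alphaStar_mul tendsto_alphaBar_div
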